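/- arXiv:2511.06564 — 2 statements merged into one kernel-verified Lean document; each statement's English description precedes it below -/
import Mathlib

section
/- Let T be a simple graph on a finite vertex type V (in the paper, a tree), let w : V → ℕ with w(V) > 0, let α > 0 and K > 0 be real numbers, and define w' : V → ℕ by w'(v) = ⌊w(v)/K⌋ and α' = α · K · w'(V) / w(V). Suppose S ⊆ V is an α-separator, i.e. every connected component H of the induced subgraph of T on V \ S satisfies w(H) ≤ w(V)/α. Then S is an α'-separator with respect to w', i.e. every connected component H of the induced subgraph of T on V \ S satisfies w'(H) ≤ w'(V)/α'. -/
open scoped Classical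

/-- The total weight of the connected component `C` of the subgraph of `T` induced on the
complement of `S` (i.e. of a component of `T − S`). -/
noncomputable def compWeight {V : Type*} [Fintype V] (T : SimpleGraph V) (S : Set V)
    (w : V → ℕ) (C : (T.induce Sᶜ).ConnectedComponent) : ℕ :=
  ∑ v : ↥Sᶜ, if (T.induce Sᶜ).connectedComponentMk v = C then w ↑v else 0

/-- Let `T` be a simple graph with weights `w` and `w(V) > 0`, let `α, K > 0`,
let `w'(v) = ⌊w(v)/K⌋` and `α' = α·K·w'(V)/w(V)`. If `S` is an `α`-separator (every
component `H` of `T − S` has `w(H) ≤ w(V)/α`), then `S` is an `α'`-separator with respect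
to `w'` (every component `H` of `T − S` has `w'(H) ≤ w'(V)/α'`). -/
theorem separator_remains_after_rounding {V : Type*} [Fintype V]
    (T : SimpleGraph V) (w : V → ℕ) (hw : 0 < ∑ v : V, w v)
    (α K : ℝ) (hα : 0 < α) (hK : 0 < K)
    (w' : V → ℕ) (hw' : ∀ v, w' v = ⌊(w v : ℝ) / K⌋₊)
    (α' : ℝ)
    (hα' : α' = α * K * ((∑ v : V, w' v : ℕ) : ℝ) / ((∑ v : V, w v : ℕ) : ℝ))
    (S : Set V)
    (hsep : ∀ C : (T.induce Sᶜ).ConnectedComponent,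
      (compWeight T S w C : ℝ) ≤ ((∑ v : V, w v : ℕ) : ℝ) / α) :
    ∀ C : (T.induce Sᶜ).ConnectedComponent,
      (compWeight T S w' C : ℝ) ≤ ((∑ v : V, w' v : ℕ) : ℝ) / α' := by
  intro C
  by_cases h0 : (∑ v : V, w' v) = 0
  · have hle : compWeight T S w' C ≤ ∑ v : V, w' v := by
      unfold compWeight
      calc ∑ v : ↥Sᶜ, (if (T.induce Sᶜ).connectedComponentMk v = C then w' ↑v else 0)
          ≤ ∑ v : ↥Sᶜ, w' ↑v :=
            Finset.sum_le_sum (fun v _ => by split <;> simp)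
        _ = ∑ v ∈ Sᶜ.toFinset, w' v := (Finset.sum_set_coe _)
        _ ≤ ∑ v : V, w' v :=
            Finset.sum_le_sum_of_subset (Finset.subset_univ _)
    have hC0 : compWeight T S w' C = 0 := by omega
    simp [hC0, hα', h0]
  · have hw0 : ((∑ v : V, w v : ℕ) : ℝ) ≠ 0 := by positivity
    have hw'0 : ((∑ v : V, w' v : ℕ) : ℝ) ≠ 0 := Nat.cast_ne_zero.mpr h0
    have hrhs : ((∑ v : V, w' v : ℕ) : ℝ) / α' = ((∑ v : V, w v : ℕ) : ℝ) / (α * K) := by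
      have hαne := hα.ne'; have hKne := hK.ne'
      have hw'0' : (∑ x : V, ((w' x : ℕ) : ℝ)) ≠ 0 := by push_cast at hw'0; exact hw'0
      have hw0' : (∑ x : V, ((w x : ℕ) : ℝ)) ≠ 0 := by push_cast at hw0; exact hw0
      rw [hα']; field_simp
    rw [hrhs]
    have h1 : (compWeight T S w' C : ℝ) ≤ (compWeight T S w C : ℝ) / K := by
      unfold compWeight
      push_cast
      rw [Finset.sum_div]
      apply Finset.sum_le_sum
      intro v _
      split
      · rw [hw']; exact Nat.floor_le (by positivity)
      · simp
    have h2 : (compWeight T S w C : ℝ) / K ≤ (((∑ v : V, w v : ℕ) : ℝ) / α) / K :=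
      (div_le_div_iff_of_pos_right hK).mpr (hsep C)
    calc (compWeight T S w' C : ℝ) ≤ (compWeight T S w C : ℝ) / K := h1
      _ ≤ (((∑ v : V, w v : ℕ) : ℝ) / α) / K := h2
      _ = ((∑ v : V, w v : ℕ) : ℝ) / (α * K) := by rw [div_div]
end

section
/- Let T be a simple graph on a finite vertex type V with n vertices (in the paper, a tree), let w : V → ℕ with w(V) > 0, let α > 0 and δ > 0 be real numbers, set K = δ · w(V) / (n · α), define w' : V → ℕ by w'(v) = ⌊w(v)/K⌋, and set α' = α · K · w'(V) / w(V). Suppose S' ⊆ V is such that every connected component H of the induced subgraph of T on V \ S' satisfies w'(H) ≤ w'(V)/α'. Then every connected component H of the induced subgraph of T on V \ S' satisfies w(H) ≤ (1 + δ) · w(V) / α. -/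
open scoped Classical

/-- Let `T` be a simple graph on `n` vertices with weights `w`, `w(V) > 0`,
let `α, δ > 0`, set `K = δ·w(V)/(n·α)`, `w'(v) = ⌊w(v)/K⌋` and `α' = α·K·w'(V)/w(V)`.
If every component `H` of `T − S'` satisfies `w'(H) ≤ w'(V)/α'`, then every component `H`
of `T − S'` satisfies `w(H) ≤ (1 + δ)·w(V)/α`. -/
theorem rounded_separator_is_relaxed_separator {V : Type*} [Fintype V]
    (T : SimpleGraph V) (w : V → ℕ) (hw : 0 < ∑ v : V, w v)
    (α δ : ℝ) (hα : 0 < α) (hδ : 0 < δ)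
    (K : ℝ) (hK : K = δ * ((∑ v : V, w v : ℕ) : ℝ) / ((Fintype.card V : ℝ) * α))
    (w' : V → ℕ) (hw' : ∀ v, w' v = ⌊(w v : ℝ) / K⌋₊)
    (α' : ℝ)
    (hα' : α' = α * K * ((∑ v : V, w' v : ℕ) : ℝ) / ((∑ v : V, w v : ℕ) : ℝ))
    (S' : Set V)
    (hsep : ∀ C : (T.induce S'ᶜ).ConnectedComponent,
      (compWeight T S' w' C : ℝ) ≤ ((∑ v : V, w' v : ℕ) : ℝ) / α') :
    ∀ C : (T.induce S'ᶜ).ConnectedComponent,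
      (compWeight T S' w C : ℝ) ≤ (1 + δ) * ((∑ v : V, w v : ℕ) : ℝ) / α := by
  intro C
  have hne : Nonempty V := by
    by_contra h
    rw [not_nonempty_iff] at h
    simp at hw
  have hW : (0:ℝ) < ((∑ v : V, w v : ℕ) : ℝ) := by exact_mod_cast hw
  have hn : (0:ℝ) < (Fintype.card V : ℝ) := by exact_mod_cast Fintype.card_pos
  have hK0 : 0 < K := by rw [hK]; positivity
  have hpt : ∀ v : V, (w v : ℝ) ≤ K * (w' v : ℝ) + K := by
    intro v
    have h1 : (w v : ℝ) / K < (w' v : ℝ) + 1 := by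
      rw [hw' v]
      push_cast
      exact Nat.lt_floor_add_one _
    have h2 := (div_lt_iff₀ hK0).mp h1
    nlinarith
  -- main bound: K * w'(H) ≤ W/α
  have hmain : K * (compWeight T S' w' C : ℝ) ≤ ((∑ v : V, w v : ℕ) : ℝ) / α := by
    rcases Nat.eq_zero_or_pos (∑ v : V, w' v) with h0 | hpos
    · have hall : ∀ v : V, w' v = 0 := by
        intro v
        exact (Finset.sum_eq_zero_iff.mp h0) v (Finset.mem_univ v)
      have hz : compWeight T S' w' C = 0 := by
        simp [compWeight, hall]
      rw [hz]
      push_cast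
      rw [mul_zero]
      positivity
    · have hW' : (0:ℝ) < ((∑ v : V, w' v : ℕ) : ℝ) := by exact_mod_cast hpos
      have hα'0 : 0 < α' := by rw [hα']; positivity
      have h2 : K * (compWeight T S' w' C : ℝ) ≤ K * (((∑ v : V, w' v : ℕ) : ℝ) / α') :=
        mul_le_mul_of_nonneg_left (hsep C) hK0.le
      have hWne : (∑ x : V, (w x : ℝ)) ≠ 0 := by
        have := hW; push_cast at this; exact this.ne'
      have hW'ne : (∑ x : V, (w' x : ℝ)) ≠ 0 := by
        have := hW'; push_cast at this; exact this.ne'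
      have h3 : K * (((∑ v : V, w' v : ℕ) : ℝ) / α') = ((∑ v : V, w v : ℕ) : ℝ) / α := by
        rw [hα']
        field_simp [hα.ne', hK0.ne', hWne, hW'ne]
      rw [h3] at h2
      exact h2
  -- sum over the component bound
  have e1 : (compWeight T S' w C : ℝ)
      = ∑ v : ↥S'ᶜ, if (T.induce S'ᶜ).connectedComponentMk v = C then (w ↑v : ℝ) else 0 := by
    unfold compWeight
    push_cast
    rfl
  have e2 : (compWeight T S' w' C : ℝ)
      = ∑ v : ↥S'ᶜ, if (T.induce S'ᶜ).connectedComponentMk v = C then (w' ↑v : ℝ) else 0 := by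
    unfold compWeight
    push_cast
    rfl
  have step : (compWeight T S' w C : ℝ)
      ≤ ∑ v : ↥S'ᶜ, if (T.induce S'ᶜ).connectedComponentMk v = C
          then K * (w' ↑v : ℝ) + K else 0 := by
    rw [e1]
    refine Finset.sum_le_sum fun v _ => ?_
    split_ifs with h
    · exact hpt v
    · exact le_rfl
  have split : (∑ v : ↥S'ᶜ, if (T.induce S'ᶜ).connectedComponentMk v = C
          then K * (w' ↑v : ℝ) + K else 0)
      = K * (∑ v : ↥S'ᶜ, if (T.induce S'ᶜ).connectedComponentMk v = C then (w' ↑v : ℝ) else 0)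
        + K * (∑ v : ↥S'ᶜ, if (T.induce S'ᶜ).connectedComponentMk v = C then (1:ℝ) else 0) := by
    rw [Finset.mul_sum, Finset.mul_sum, ← Finset.sum_add_distrib]
    refine Finset.sum_congr rfl fun v _ => ?_
    split_ifs <;> ring
  have hcount : (∑ v : ↥S'ᶜ, if (T.induce S'ᶜ).connectedComponentMk v = C then (1:ℝ) else 0)
      ≤ (Fintype.card V : ℝ) := by
    calc (∑ v : ↥S'ᶜ, if (T.induce S'ᶜ).connectedComponentMk v = C then (1:ℝ) else 0)
        ≤ ∑ _v : ↥S'ᶜ, (1:ℝ) := by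
          refine Finset.sum_le_sum fun v _ => ?_
          split_ifs <;> norm_num
      _ = (Fintype.card ↥S'ᶜ : ℝ) := by simp
      _ ≤ (Fintype.card V : ℝ) := by
          exact_mod_cast Fintype.card_le_of_injective (Subtype.val : ↥S'ᶜ → V) Subtype.val_injective
  have hKn : K * (Fintype.card V : ℝ) = δ * ((∑ v : V, w v : ℕ) : ℝ) / α := by
    rw [hK]
    field_simp
  have hfin : (1 + δ) * ((∑ v : V, w v : ℕ) : ℝ) / α
      = ((∑ v : V, w v : ℕ) : ℝ) / α + δ * ((∑ v : V, w v : ℕ) : ℝ) / α := by ring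
  have hKnn : K * (∑ v : ↥S'ᶜ, if (T.induce S'ᶜ).connectedComponentMk v = C then (1:ℝ) else 0)
      ≤ K * (Fintype.card V : ℝ) := mul_le_mul_of_nonneg_left hcount hK0.le
  rw [hfin]
  rw [split] at step
  rw [← e2] at step
  linarith
end
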